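/- arXiv:1810.07001 — 3 statements merged into one kernel-verified Lean document; each statement's English description precedes it below -/
import Mathlib

section
/- Let k be any field and let f ∈ k[X₀, X₁, X₂, X₃] be a nonzero homogeneous polynomial of degree 3. Then there exist a field extension K of k with [K : k] equal to 1 or 3 and a nonzero vector v ∈ K⁴ such that f(v) = 0. (Hence every cubic surface X ⊂ ℙ³ over k has a closed point of degree 1 or 3, so X⁽³⁾ has a point over any field.) -/
universe u

open Polynomial

namespace CubicAux

variable {k : Type u} [Field k]

/-- The substitution `(X, 1, 0, 0)`. -/
noncomputable def lin (k : Type u) [Field k] : Fin 4 → Polynomial k :=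
  fun i => if i = 0 then X else if i = 1 then 1 else 0

lemma aeval_lin (f : MvPolynomial (Fin 4) k) {K : Type u} [Field K] [Algebra k K] (a : K) :
    Polynomial.aeval a (MvPolynomial.aeval (lin k) f)
      = MvPolynomial.aeval (fun i : Fin 4 => if i = 0 then a else if i = 1 then 1 else 0) f := by
  rw [MvPolynomial.comp_aeval_apply]
  have hfun : (fun i => Polynomial.aeval a (lin k i))
      = (fun i : Fin 4 => if i = 0 then a else if i = 1 then 1 else 0) := by
    funext i
    fin_cases i <;> simp [lin]
  rw [hfun]

lemma deg_sum (f : MvPolynomial (Fin 4) k) (hhom : f.IsHomogeneous 3) {d : Fin 4 →₀ ℕ}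
    (hd : MvPolynomial.coeff d f ≠ 0) : d 0 + d 1 + d 2 + d 3 = 3 := by
  have h := hhom hd
  rw [Finsupp.weight_apply, Finsupp.sum_fintype] at h
  · simpa [Fin.sum_univ_four] using h
  · intro i; simp

lemma eq_single (f : MvPolynomial (Fin 4) k) (hhom : f.IsHomogeneous 3) {d : Fin 4 →₀ ℕ}
    (hd : MvPolynomial.coeff d f ≠ 0) (h1 : d 1 = 0) (h2 : d 2 = 0) (h3 : d 3 = 0) :
    d = Finsupp.single 0 3 := by
  have hs := deg_sum f hhom hd
  ext i
  fin_cases i <;> simp_all [Finsupp.single_apply]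

lemma prod_lin {d : Fin 4 →₀ ℕ} (h2 : d 2 = 0) (h3 : d 3 = 0) :
    (∏ i ∈ d.support, (lin k i) ^ (d i)) = X ^ (d 0) := by
  have hcong : ∀ i ∈ d.support, (lin k i) ^ (d i) = X ^ (if i = 0 then d i else 0) := by
    intro i hi
    fin_cases i
    · simp [lin]
    · simp [lin]
    · exact absurd h2 (Finsupp.mem_support_iff.mp hi)
    · exact absurd h3 (Finsupp.mem_support_iff.mp hi)
  rw [Finset.prod_congr rfl hcong, Finset.prod_pow_eq_pow_sum]
  congr 1
  rw [Finset.sum_ite_eq' d.support (0 : Fin 4) d]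
  by_cases h0 : (0 : Fin 4) ∈ d.support
  · simp [h0]
  · simp [h0, Finsupp.notMem_support_iff.mp h0]

lemma eval_e (f : MvPolynomial (Fin 4) k) (hhom : f.IsHomogeneous 3) :
    MvPolynomial.aeval (fun i : Fin 4 => if i = 0 then (1 : k) else 0) f
      = MvPolynomial.coeff (Finsupp.single 0 3) f := by
  rw [MvPolynomial.aeval_def, MvPolynomial.eval₂_eq]
  rw [Finset.sum_eq_single (Finsupp.single 0 3)]
  · rw [Finset.prod_eq_one, mul_one]
    · simp
    · intro i hi
      rw [Finsupp.support_single_ne_zero _ (by norm_num)] at hi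
      simp only [Finset.mem_singleton] at hi
      subst hi
      simp
  · intro d hdmem hdne
    have hd : MvPolynomial.coeff d f ≠ 0 := MvPolynomial.mem_support_iff.mp hdmem
    have hj : ∃ j : Fin 4, j ≠ 0 ∧ d j ≠ 0 := by
      by_contra hc
      push_neg at hc
      exact hdne (eq_single f hhom hd (hc 1 (by decide)) (hc 2 (by decide)) (hc 3 (by decide)))
    obtain ⟨j, hj0, hjd⟩ := hj
    rw [Finset.prod_eq_zero (Finsupp.mem_support_iff.mpr hjd), mul_zero]
    simp [hj0, zero_pow hjd]
  · intro h
    simp [MvPolynomial.notMem_support_iff.mp h]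

lemma coeff_three (f : MvPolynomial (Fin 4) k) (hhom : f.IsHomogeneous 3) :
    (MvPolynomial.aeval (lin k) f).coeff 3 = MvPolynomial.coeff (Finsupp.single 0 3) f := by
  rw [MvPolynomial.aeval_def, MvPolynomial.eval₂_eq, Polynomial.finset_sum_coeff]
  rw [Finset.sum_eq_single (Finsupp.single 0 3)]
  · have hprod := prod_lin (k := k) (d := Finsupp.single 0 3) (by simp) (by simp)
    rw [hprod]
    simp [Polynomial.algebraMap_eq, Polynomial.coeff_C_mul, Polynomial.coeff_X_pow]
  · intro d hdmem hdne
    have hd : MvPolynomial.coeff d f ≠ 0 := MvPolynomial.mem_support_iff.mp hdmem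
    by_cases h2 : d 2 = 0
    · by_cases h3 : d 3 = 0
      · have h0 : d 0 ≠ 3 := by
          intro h0
          have h1 : d 1 = 0 := by have := deg_sum f hhom hd; omega
          exact hdne (eq_single f hhom hd h1 h2 h3)
        rw [prod_lin h2 h3, Polynomial.algebraMap_eq, Polynomial.coeff_C_mul,
          Polynomial.coeff_X_pow, if_neg (by omega), mul_zero]
      · rw [Finset.prod_eq_zero (Finsupp.mem_support_iff.mpr h3), mul_zero,
          Polynomial.coeff_zero]
        simp [lin, zero_pow h3]
    · rw [Finset.prod_eq_zero (Finsupp.mem_support_iff.mpr h2), mul_zero,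
        Polynomial.coeff_zero]
      simp [lin, zero_pow h2]
  · intro h
    simp [MvPolynomial.notMem_support_iff.mp h]

lemma natDegree_le (f : MvPolynomial (Fin 4) k) (hhom : f.IsHomogeneous 3) :
    (MvPolynomial.aeval (lin k) f).natDegree ≤ 3 := by
  rw [MvPolynomial.aeval_def, MvPolynomial.eval₂_eq]
  apply Polynomial.natDegree_sum_le_of_forall_le
  intro d hdmem
  have hd : MvPolynomial.coeff d f ≠ 0 := MvPolynomial.mem_support_iff.mp hdmem
  refine le_trans (Polynomial.natDegree_mul_le) ?_
  rw [Polynomial.algebraMap_eq, Polynomial.natDegree_C, zero_add]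
  refine le_trans (Polynomial.natDegree_prod_le d.support fun i => (lin k i) ^ (d i)) ?_
  have hle : ∀ i : Fin 4, ((lin k i) ^ (d i)).natDegree ≤ d i := by
    intro i
    refine le_trans Polynomial.natDegree_pow_le ?_
    have h1 : (lin k i).natDegree ≤ 1 := by
      fin_cases i <;> simp [lin]
    calc d i * (lin k i).natDegree ≤ d i * 1 := Nat.mul_le_mul_left _ h1
      _ = d i := Nat.mul_one _
  refine le_trans (Finset.sum_le_sum fun i _ => hle i) ?_
  refine le_trans (Finset.sum_le_sum_of_subset (Finset.subset_univ d.support)) ?_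
  have := deg_sum f hhom hd
  rw [Fin.sum_univ_four]
  omega

end CubicAux

open CubicAux in
/-- Every cubic surface over a field `k` has a point over a field extension of
degree 1 or 3. -/
theorem cubic_point_deg_one_or_three {k : Type u} [Field k]
    (f : MvPolynomial (Fin 4) k) (hf : f ≠ 0) (hhom : f.IsHomogeneous 3) :
    ∃ (K : Type u) (_ : Field K) (_ : Algebra k K),
      (Module.finrank k K = 1 ∨ Module.finrank k K = 3) ∧
      ∃ v : Fin 4 → K, v ≠ 0 ∧ MvPolynomial.aeval v f = 0 := by
  classical
  set p : Polynomial k := MvPolynomial.aeval (lin k) f with hp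
  by_cases ht : MvPolynomial.coeff (Finsupp.single 0 3) f = 0
  · refine ⟨k, inferInstance, inferInstance, Or.inl (Module.finrank_self k),
      (fun i : Fin 4 => if i = 0 then (1 : k) else 0), ?_, ?_⟩
    · intro h
      have := congrFun h 0
      simp at this
    · rw [eval_e f hhom]; exact ht
  · have hdeg : p.natDegree = 3 := by
      refine le_antisymm (natDegree_le f hhom) ?_
      refine Polynomial.le_natDegree_of_ne_zero ?_
      rw [hp, coeff_three f hhom]
      exact ht
    have hp0 : p ≠ 0 := fun h => by simp [h] at hdeg
    by_cases hroot : ∃ a : k, Polynomial.aeval a p = 0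
    · obtain ⟨a, ha⟩ := hroot
      refine ⟨k, inferInstance, inferInstance, Or.inl (Module.finrank_self k),
        (fun i : Fin 4 => if i = 0 then a else if i = 1 then 1 else 0), ?_, ?_⟩
      · intro h
        have := congrFun h 1
        simp at this
      · rw [← aeval_lin f a, ← hp]; exact ha
    · have hirr : Irreducible p := by
        constructor
        · intro hu
          have := Polynomial.natDegree_eq_zero_of_isUnit hu
          omega
        · intro q r hqr
          by_contra hc
          push_neg at hc
          obtain ⟨hq, hr⟩ := hc
          have hq0 : q ≠ 0 := fun h => hp0 (by rw [hqr, h, zero_mul])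
          have hr0 : r ≠ 0 := fun h => hp0 (by rw [hqr, h, mul_zero])
          have hsum : q.natDegree + r.natDegree = 3 := by
            rw [← Polynomial.natDegree_mul hq0 hr0, ← hqr]
            exact hdeg
          have key : ∀ s t : Polynomial k, p = s * t → s ≠ 0 → s.natDegree = 1 → False := by
            intro s t hst hs0 hs1
            have hds : s.degree = 1 := by
              rw [Polynomial.degree_eq_natDegree hs0, hs1]; rfl
            obtain ⟨x, hx⟩ := Polynomial.exists_root_of_degree_eq_one hds
            apply hroot
            refine ⟨x, ?_⟩
            rw [Polynomial.coe_aeval_eq_eval, hst, Polynomial.eval_mul, hx.eq_zero, zero_mul]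
          have hq1 : 1 ≤ q.natDegree := by
            rcases Nat.eq_zero_or_pos q.natDegree with h | h
            · exfalso
              apply hq
              rw [Polynomial.eq_C_of_natDegree_eq_zero h]
              refine Polynomial.isUnit_C.mpr (isUnit_iff_ne_zero.mpr ?_)
              intro hc0
              apply hq0
              rw [Polynomial.eq_C_of_natDegree_eq_zero h, hc0, map_zero]
            · exact h
          have hr1 : 1 ≤ r.natDegree := by
            rcases Nat.eq_zero_or_pos r.natDegree with h | h
            · exfalso
              apply hr
              rw [Polynomial.eq_C_of_natDegree_eq_zero h]
              refine Polynomial.isUnit_C.mpr (isUnit_iff_ne_zero.mpr ?_)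
              intro hc0
              apply hr0
              rw [Polynomial.eq_C_of_natDegree_eq_zero h, hc0, map_zero]
            · exact h
          rcases (by omega : q.natDegree = 1 ∨ r.natDegree = 1) with h | h
          · exact key q r hqr hq0 h
          · exact key r q (hqr.trans (mul_comm q r)) hr0 h
      have hfact : Fact (Irreducible p) := ⟨hirr⟩
      refine ⟨AdjoinRoot p, inferInstance, inferInstance, Or.inr ?_, ?_⟩
      · have h2 := (AdjoinRoot.powerBasis hp0).finrank
        rw [show (AdjoinRoot.powerBasis hp0).dim = p.natDegree from rfl] at h2
        rw [h2, hdeg]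
      · refine ⟨(fun i : Fin 4 => if i = 0 then AdjoinRoot.root p
          else if i = 1 then 1 else 0), ?_, ?_⟩
        · intro h
          have := congrFun h 1
          simp at this
        · have h3 := aeval_lin f (K := AdjoinRoot p) (AdjoinRoot.root p)
          rw [← hp] at h3
          rw [← h3, AdjoinRoot.aeval_eq, AdjoinRoot.mk_self]
end

section
/- Let k be an algebraically closed field and let p₁, …, p₆ ∈ k⁴ be nonzero vectors such that any four of them are linearly independent (i.e. the corresponding six points of ℙ³(k) are in general position). Then there exists an invertible linear map g ∈ GL₄(k) such that each pᵢ lies on the twisted cubic g·C₀: that is, for each i ∈ {1, …, 6} there are a pair (sᵢ, tᵢ) ∈ k² ∖ {(0,0)} and a nonzero scalar λᵢ ∈ k with g(sᵢ³, sᵢ²tᵢ, sᵢtᵢ², tᵢ³) = λᵢ · pᵢ. (Through any six points of ℙ³ in general position one can pass a twisted cubic curve.) -/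
/-!
Take `p₀, …, p₃` as a basis and write `p₄ = ∑ cᵢ pᵢ`, `p₅ = ∑ wᵢ pᵢ`. General position says
that every `cᵢ` and `wᵢ` is nonzero and that the ratios `μᵢ = wᵢ / cᵢ` are pairwise distinct.
In the rescaled basis `bᵢ = cᵢ pᵢ` the points are `bᵢ`, `∑ bᵢ` and `∑ μᵢ bᵢ`, and with
`aᵢ = -μᵢ⁻¹` the cubic `(s : t) ↦ ∑ᵢ (∏_{l ≠ i} (t - aₗ s)) bᵢ` passes through `bⱼ` at `(1 : aⱼ)`,
through `∑ bᵢ` at `(0 : 1)` and through `(∏ μₗ⁻¹) ∑ μᵢ bᵢ` at `(1 : 0)`. The linear map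
realising it hits every `bⱼ`, so it is invertible.
-/

open Finset Function Matrix

section LinearAlgebra

variable {K V ι : Type*} [Field K] [AddCommGroup V] [Module K V] [Fintype ι]

theorem sum_smul_mem_span_image_compl {s : Set ι} {b f : ι → V} {d : ι → K}
    (hd : ∀ l ∈ s, d l = 0) (hf : ∀ l ∉ s, f l = b l) :
    ∑ l, d l • b l ∈ Submodule.span K (f '' sᶜ) := by
  refine Submodule.sum_mem _ fun l _ => ?_
  by_cases hl : l ∈ s
  · simp [hd l hl]
  · rw [← hf l hl]
    exact Submodule.smul_mem _ _ (Submodule.subset_span ⟨l, hl, rfl⟩)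

variable [DecidableEq ι]

theorem LinearIndependent.coeff_ne_zero_of_update {b : ι → V} {c : ι → K} {j : ι}
    (h : LinearIndependent K (Function.update b j (∑ i, c i • b i))) : c j ≠ 0 := by
  intro hc
  refine h.notMem_span_image (s := {j}ᶜ) (x := j) (by simp) ?_
  rw [update_self]
  exact sum_smul_mem_span_image_compl (by simpa using hc) fun l hl => by simp_all

theorem LinearIndependent.mul_ne_mul_of_update_update {b : ι → V} {c w : ι → K} {i j : ι}
    (hij : i ≠ j) (hci : c i ≠ 0)
    (h : LinearIndependent K
      (Function.update (Function.update b i (∑ l, c l • b l)) j (∑ l, w l • b l))) :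
    c i * w j ≠ c j * w i := by
  intro hcw
  set f := Function.update (Function.update b i (∑ l, c l • b l)) j (∑ l, w l • b l)
  have hfi : f i = ∑ l, c l • b l := by simp [f, hij]
  have hfj : f j = ∑ l, w l • b l := by simp [f]
  -- `w i • f i - c i • f j` has no `b i`- and no `b j`-component
  have hu : ∑ l, (w i * c l - c i * w l) • b l ∈ Submodule.span K (f '' {j}ᶜ) := by
    refine Submodule.span_mono (Set.image_mono ?_)
      (sum_smul_mem_span_image_compl (s := {i, j}) ?_ ?_)
    · exact Set.compl_subset_compl.mpr (by simp)
    · rintro l (rfl | rfl)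
      · ring
      · linear_combination -hcw
    · intro l hl
      simp only [Set.mem_insert_iff, Set.mem_singleton_iff, not_or] at hl
      simp [f, hl.1, hl.2]
  have hfi_mem : f i ∈ Submodule.span K (f '' {j}ᶜ) :=
    Submodule.subset_span ⟨i, hij, rfl⟩
  refine h.notMem_span_image (s := {j}ᶜ) (x := j) (by simp) ?_
  have : f j = (c i)⁻¹ • (w i • f i - ∑ l, (w i * c l - c i * w l) • b l) := by
    simp only [hfi, hfj, sub_smul, mul_smul, Finset.sum_sub_distrib, ← Finset.smul_sum]
    rw [sub_sub_cancel, inv_smul_smul₀ hci]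
  rw [this]
  exact Submodule.smul_mem _ _ (Submodule.sub_mem _ (Submodule.smul_mem _ _ hfi_mem) hu)

end LinearAlgebra

theorem Matrix.isUnit_of_linearIndependent_mem_range {K n : Type*} [Field K] [Fintype n]
    [DecidableEq n] {G : Matrix n n K} {b : n → n → K} (hb : LinearIndependent K b)
    (h : ∀ j, ∃ x, G *ᵥ x = b j) : IsUnit G := by
  rw [← mulVec_surjective_iff_isUnit]
  change Surjective G.mulVecLin
  rw [← LinearMap.range_eq_top, ← top_le_iff,
    ← hb.span_eq_top_of_card_eq_finrank' (by simp), Submodule.span_le]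
  rintro _ ⟨j, rfl⟩
  simpa using h j

section TwistedCubic

variable {k : Type*} [Field k]

def twistedCubicMap (s t : k) : Fin 4 → k := ![s ^ 3, s ^ 2 * t, s * t ^ 2, t ^ 3]

def IsOnTwistedCubic (g : Matrix (Fin 4) (Fin 4) k) (x : Fin 4 → k) : Prop :=
  ∃ s t : k, (s, t) ≠ (0, 0) ∧ ∃ c : k, c ≠ 0 ∧ g *ᵥ twistedCubicMap s t = c • x

theorem IsOnTwistedCubic.smul {g : Matrix (Fin 4) (Fin 4) k} {x : Fin 4 → k}
    (h : IsOnTwistedCubic g x) {a : k} (ha : a ≠ 0) : IsOnTwistedCubic g (a • x) := by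
  obtain ⟨s, t, hst, c, hc, hx⟩ := h
  exact ⟨s, t, hst, c / a, div_ne_zero hc ha, by rw [hx, smul_smul, div_mul_cancel₀ c ha]⟩

/-- The coefficients of `(t - x s) (t - y s) (t - z s)` in the monomials `s³, s²t, st², t³`. -/
def cubicCoeffs (x y z : k) : Fin 4 → k :=
  ![-(x * y * z), x * y + x * z + y * z, -(x + y + z), 1]

theorem cubicCoeffs_dotProduct (x y z s t : k) :
    cubicCoeffs x y z ⬝ᵥ twistedCubicMap s t = (t - x * s) * (t - y * s) * (t - z * s) := by
  simp [cubicCoeffs, twistedCubicMap, dotProduct, Fin.sum_univ_four]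
  ring

theorem Fin.prod_univ_erase_eq_prod_succAbove {M : Type*} [CommMonoid M] {n : ℕ}
    (f : Fin (n + 1) → M) (i : Fin (n + 1)) :
    ∏ l ∈ univ.erase i, f l = ∏ j : Fin n, f (i.succAbove j) := by
  rw [← compl_singleton, ← Fin.image_succAbove_univ, prod_image Fin.succAbove_right_injective.injOn]

/-- Row `i` holds the binary cubic vanishing at the parameters `(1 : a l)`, `l ≠ i`. -/
def lagrangeCubics (a : Fin 4 → k) : Matrix (Fin 4) (Fin 4) k :=
  Matrix.of fun i => cubicCoeffs (a (i.succAbove 0)) (a (i.succAbove 1)) (a (i.succAbove 2))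

theorem lagrangeCubics_mulVec (a : Fin 4 → k) (s t : k) (i : Fin 4) :
    (lagrangeCubics a *ᵥ twistedCubicMap s t) i = ∏ l ∈ univ.erase i, (t - a l * s) := by
  rw [Fin.prod_univ_erase_eq_prod_succAbove, Fin.prod_univ_three]
  exact cubicCoeffs_dotProduct _ _ _ s t

theorem lagrangeCubics_mulVec_param (a : Fin 4 → k) (j : Fin 4) :
    lagrangeCubics a *ᵥ twistedCubicMap 1 (a j) =
      Pi.single j (∏ l ∈ univ.erase j, (a j - a l)) := by
  ext i
  rw [lagrangeCubics_mulVec]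
  obtain rfl | hij := eq_or_ne i j
  · simp
  · rw [Pi.single_eq_of_ne hij, prod_eq_zero (mem_erase.2 ⟨hij.symm, mem_univ j⟩) (by simp)]

theorem lagrangeCubics_mulVec_zero_one (a : Fin 4 → k) :
    lagrangeCubics a *ᵥ twistedCubicMap 0 1 = fun _ => 1 := by
  ext i
  simp [lagrangeCubics_mulVec]

theorem lagrangeCubics_mulVec_one_zero (a : Fin 4 → k) :
    lagrangeCubics a *ᵥ twistedCubicMap 1 0 = fun i => ∏ l ∈ univ.erase i, -a l := by
  ext i
  simp [lagrangeCubics_mulVec]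

theorem exists_twistedCubic_through_frame {b : Fin 4 → Fin 4 → k} (hb : LinearIndependent k b)
    {μ : Fin 4 → k} (hμ0 : ∀ i, μ i ≠ 0) (hμ : Injective μ) :
    ∃ g : GL (Fin 4) k, (∀ i, IsOnTwistedCubic g (b i)) ∧ IsOnTwistedCubic g (∑ i, b i) ∧
      IsOnTwistedCubic g (∑ i, μ i • b i) := by
  set a : Fin 4 → k := fun i => -(μ i)⁻¹
  have ha : Injective a := fun i j h => hμ (inv_injective (neg_injective h))
  set G := (Matrix.of b)ᵀ * lagrangeCubics a
  have hG : ∀ v, G *ᵥ v = ∑ i, (lagrangeCubics a *ᵥ v) i • b i := fun v => by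
    rw [← mulVec_mulVec, mulVec_transpose, vecMul_eq_sum]
    rfl
  set d : Fin 4 → k := fun j => ∏ l ∈ univ.erase j, (a j - a l)
  have hd : ∀ j, d j ≠ 0 := fun j =>
    prod_ne_zero_iff.2 fun l hl => sub_ne_zero.2 (ha.ne (ne_of_mem_erase hl).symm)
  have hGb : ∀ j, G *ᵥ twistedCubicMap 1 (a j) = d j • b j := fun j => by
    simp [hG, lagrangeCubics_mulVec_param, d, Pi.single_apply]
  have hGunit : IsUnit G := isUnit_of_linearIndependent_mem_range hb fun j =>
    ⟨(d j)⁻¹ • twistedCubicMap 1 (a j), by rw [mulVec_smul, hGb, inv_smul_smul₀ (hd j)]⟩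
  refine ⟨hGunit.unit, fun j => ⟨1, a j, by simp, d j, hd j, hGb j⟩,
    ⟨0, 1, by simp, 1, one_ne_zero, ?_⟩,
    ⟨1, 0, by simp, ∏ l, (μ l)⁻¹, prod_ne_zero_iff.2 fun l _ => inv_ne_zero (hμ0 l), ?_⟩⟩
  · rw [IsUnit.unit_spec, hG, lagrangeCubics_mulVec_zero_one]
    simp
  · rw [IsUnit.unit_spec, hG, lagrangeCubics_mulVec_one_zero, smul_sum]
    refine sum_congr rfl fun i _ => ?_
    rw [smul_smul, ← mul_prod_erase univ _ (mem_univ i)]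
    simp only [a, neg_neg]
    field_simp [hμ0 i]

theorem exists_coords_of_generalPosition {p : Fin 6 → Fin 4 → k}
    (hgen : ∀ e : Fin 4 → Fin 6, Injective e → LinearIndependent k (p ∘ e)) :
    ∃ c w : Fin 4 → k, (∀ i, c i ≠ 0) ∧ (∀ i, w i ≠ 0) ∧ Injective (fun i => w i / c i) ∧
      ∑ i, c i • p (Fin.castAdd 2 i) = p 4 ∧ ∑ i, w i • p (Fin.castAdd 2 i) = p 5 := by
  set b := p ∘ Fin.castAdd 2
  have hcoord : ∀ v, ∃ c : Fin 4 → k, ∑ i, c i • b i = v := fun v =>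
    (Submodule.mem_span_range_iff_exists_fun k).1
      ((hgen _ (Fin.castAdd_injective 4 2)).span_eq_top_of_card_eq_finrank' (by simp) ▸
        Submodule.mem_top)
  obtain ⟨c, hc⟩ := hcoord (p 4)
  obtain ⟨w, hw⟩ := hcoord (p 5)
  have hinj₁ : ∀ m : Fin 6, 4 ≤ m → ∀ j : Fin 4,
      Injective (Function.update (Fin.castAdd 2 : Fin 4 → Fin 6) j m) := by decide
  have hinj₂ : ∀ i j : Fin 4, i ≠ j →
      Injective (Function.update (Function.update (Fin.castAdd 2 : Fin 4 → Fin 6) i 4) j 5) := by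
    decide
  have hupdate (m : Fin 6) (hm : 4 ≤ m) (j : Fin 4) :
      LinearIndependent k (Function.update b j (p m)) := by
    rw [← Function.comp_update]
    exact hgen _ (hinj₁ m hm j)
  have hc0 (j : Fin 4) : c j ≠ 0 :=
    LinearIndependent.coeff_ne_zero_of_update (b := b) (hc ▸ hupdate 4 le_rfl j)
  have hw0 (j : Fin 4) : w j ≠ 0 :=
    LinearIndependent.coeff_ne_zero_of_update (b := b) (hw ▸ hupdate 5 (by decide) j)
  refine ⟨c, w, hc0, hw0, fun i j h => ?_, hc, hw⟩
  by_contra hij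
  rw [div_eq_div_iff (hc0 i) (hc0 j)] at h
  refine LinearIndependent.mul_ne_mul_of_update_update (b := b) (c := c) (w := w) hij (hc0 i) ?_
    (by linear_combination -h)
  rw [hc, hw, ← Function.comp_update, ← Function.comp_update]
  exact hgen _ (hinj₂ i j hij)

end TwistedCubic

theorem twisted_cubic_through_six_points_general {k : Type*} [Field k]
    (p : Fin 6 → Fin 4 → k)
    (hgen : ∀ e : Fin 4 → Fin 6, Function.Injective e →
      LinearIndependent k (p ∘ e)) :
    ∃ g : GL (Fin 4) k, ∀ i, ∃ s t : k, (s, t) ≠ (0, 0) ∧ ∃ c : k, c ≠ 0 ∧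
      (g : Matrix (Fin 4) (Fin 4) k).mulVec ![s ^ 3, s ^ 2 * t, s * t ^ 2, t ^ 3]
        = c • p i := by
  obtain ⟨c, w, hc0, hw0, hμ, hc, hw⟩ := exists_coords_of_generalPosition hgen
  have hb : LinearIndependent k fun i => c i • p (Fin.castAdd 2 i) :=
    (hgen _ (Fin.castAdd_injective 4 2)).units_smul fun i => Units.mk0 (c i) (hc0 i)
  obtain ⟨g, hframe, h4, h5⟩ :=
    exists_twistedCubic_through_frame hb (fun i => div_ne_zero (hw0 i) (hc0 i)) hμ
  refine ⟨g, fun i => show IsOnTwistedCubic _ (p i) from ?_⟩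
  induction i using Fin.addCases (m := 4) (n := 2) with
  | left j => simpa [inv_smul_smul₀ (hc0 j)] using (hframe j).smul (inv_ne_zero (hc0 j))
  | right j =>
    fin_cases j
    · simpa [hc] using h4
    · simpa [smul_smul, div_mul_cancel₀, hc0, hw] using h5

/-- Through any six points of `ℙ³` in general position over an algebraically
closed field one can pass a twisted cubic curve. -/
theorem twisted_cubic_through_six_points {k : Type*} [Field k] [IsAlgClosed k]
    (p : Fin 6 → Fin 4 → k) (hp : ∀ i, p i ≠ 0)
    (hgen : ∀ e : Fin 4 → Fin 6, Function.Injective e →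
      LinearIndependent k (p ∘ e)) :
    ∃ g : GL (Fin 4) k, ∀ i, ∃ s t : k, (s, t) ≠ (0, 0) ∧ ∃ c : k, c ≠ 0 ∧
      (g : Matrix (Fin 4) (Fin 4) k).mulVec ![s ^ 3, s ^ 2 * t, s * t ^ 2, t ^ 3]
        = c • p i :=
  twisted_cubic_through_six_points_general p hgen
end

section
/- Let k be an algebraically closed field and let p₁, …, p₆ ∈ k⁴ be nonzero vectors such that any four of them are linearly independent (i.e. the corresponding six points of ℙ³(k) are in general position). Suppose g₁, g₂ ∈ GL₄(k) are such that each of the six points lies both on the twisted cubic g₁·C₀ and on the twisted cubic g₂·C₀ (i.e. for each i and each j ∈ {1,2} there are (s,t) ≠ (0,0) and λ ≠ 0 with g_j(s³, s²t, st², t³) = λ·pᵢ). Then the two twisted cubics coincide as subsets of ℙ³(k): for every (s,t) ∈ k² ∖ {(0,0)} there exist (s',t') ∈ k² ∖ {(0,0)} and nonzero λ ∈ k with g₂(s'³, s'²t', s't'², t'³) = λ · g₁(s³, s²t, st², t³). (The twisted cubic through six points in general position is unique.) -/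
namespace TCHelp

variable {k : Type*} [Field k]

@[simp] lemma cons_val_five {α : Type*} (a b c d e f g : α) :
    (![a,b,c,d,e,f,g] : Fin 7 → α) 5 = f := rfl
@[simp] lemma cons_val_six {α : Type*} (a b c d e f g : α) :
    (![a,b,c,d,e,f,g] : Fin 7 → α) 6 = g := rfl

@[simp] lemma fv4_0 : ((0:Fin 4):ℕ) = 0 := rfl
@[simp] lemma fv4_1 : ((1:Fin 4):ℕ) = 1 := rfl
@[simp] lemma fv4_2 : ((2:Fin 4):ℕ) = 2 := rfl
@[simp] lemma fv4_3 : ((3:Fin 4):ℕ) = 3 := rfl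
@[simp] lemma fv7_0 : ((0:Fin 7):ℕ) = 0 := rfl
@[simp] lemma fv7_1 : ((1:Fin 7):ℕ) = 1 := rfl
@[simp] lemma fv7_2 : ((2:Fin 7):ℕ) = 2 := rfl
@[simp] lemma fv7_3 : ((3:Fin 7):ℕ) = 3 := rfl
@[simp] lemma fv7_4 : ((4:Fin 7):ℕ) = 4 := rfl
@[simp] lemma fv7_5 : ((5:Fin 7):ℕ) = 5 := rfl
@[simp] lemma fv7_6 : ((6:Fin 7):ℕ) = 6 := rfl

/-- Evaluation of a binary sextic form with coefficient vector `w`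
(`w i` is the coefficient of `s^(6-i) * t^i`). -/
def E6 (w : Fin 7 → k) (s t : k) : k :=
  w 0 * s^6 + w 1 * s^5*t + w 2 * s^4*t^2 + w 3 * s^3*t^3 +
  w 4 * s^2*t^4 + w 5 * s*t^5 + w 6 * t^6

/-- Evaluation of a binary cubic form. -/
def E3 (r : Fin 4 → k) (s t : k) : k :=
  r 0 * s^3 + r 1 * s^2*t + r 2 * s*t^2 + r 3 * t^3

/-- Coefficients of the product of two cubic forms. -/
def cconv (x y : Fin 4 → k) : Fin 7 → k :=
  ![x 0 * y 0,
    x 0 * y 1 + x 1 * y 0,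
    x 0 * y 2 + x 1 * y 1 + x 2 * y 0,
    x 0 * y 3 + x 1 * y 2 + x 2 * y 1 + x 3 * y 0,
    x 1 * y 3 + x 2 * y 2 + x 3 * y 1,
    x 2 * y 3 + x 3 * y 2,
    x 3 * y 3]

lemma E6_cconv (x y : Fin 4 → k) (s t : k) :
    E6 (cconv x y) s t = E3 x s t * E3 y s t := by
  simp [E6, E3, cconv]
  ring

lemma E6_sub (u v : Fin 7 → k) (s t : k) :
    E6 (u - v) s t = E6 u s t - E6 v s t := by
  simp [E6]; ring

lemma E6_smul (c : k) (u : Fin 7 → k) (s t : k) :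
    E6 (c • u) s t = c * E6 u s t := by
  simp [E6]; ring

lemma E6_one (w : Fin 7 → k) (t : k) :
    E6 w 1 t = ∑ i : Fin 7, w i * t ^ (i : ℕ) := by
  simp only [E6, Fin.sum_univ_seven, fv7_0, fv7_1, fv7_2, fv7_3, fv7_4, fv7_5, fv7_6]
  ring

lemma E3_one (r : Fin 4 → k) (t : k) :
    E3 r 1 t = ∑ i : Fin 4, r i * t ^ (i : ℕ) := by
  simp only [E3, Fin.sum_univ_four, fv4_0, fv4_1, fv4_2, fv4_3]
  ring

/-- A polynomial-function vanishing identically has zero coefficients. -/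
lemma vec_eq_zero_of_eval {n : ℕ} [Infinite k] (w : Fin n → k)
    (h : ∀ t : k, ∑ i : Fin n, w i * t ^ (i : ℕ) = 0) : w = 0 := by
  set P : Polynomial k := ∑ i : Fin n, Polynomial.C (w i) * Polynomial.X ^ (i : ℕ) with hP
  have hev : ∀ t : k, P.eval t = ∑ i : Fin n, w i * t ^ (i : ℕ) := by
    intro t; simp [hP, Polynomial.eval_finset_sum]
  have hP0 : P = 0 := by
    apply Polynomial.funext
    intro t; rw [hev t, h t]; simp
  funext i
  have : P.coeff (i : ℕ) = w i := by
    rw [hP, Polynomial.finset_sum_coeff]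
    rw [Finset.sum_eq_single i]
    · simp
    · intro j _ hj
      have : (i : ℕ) ≠ (j : ℕ) := fun hc => hj (Fin.ext hc).symm
      simp only [Polynomial.coeff_C_mul, Polynomial.coeff_X_pow]
      rw [if_neg this, mul_zero]
    · simp
  rw [hP0] at this
  simpa using this.symm

/-- If the product of two polynomial functions vanishes identically, one of the
coefficient vectors is zero. -/
lemma vec_mul_eval_zero {n m : ℕ} [Infinite k] (w : Fin n → k) (r : Fin m → k)
    (h : ∀ t : k, (∑ i : Fin n, w i * t ^ (i : ℕ)) * (∑ i : Fin m, r i * t ^ (i : ℕ)) = 0) :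
    w = 0 ∨ r = 0 := by
  set P : Polynomial k := ∑ i : Fin n, Polynomial.C (w i) * Polynomial.X ^ (i : ℕ) with hP
  set Q : Polynomial k := ∑ i : Fin m, Polynomial.C (r i) * Polynomial.X ^ (i : ℕ) with hQ
  have hev : ∀ t : k, (P * Q).eval t = 0 := by
    intro t
    rw [Polynomial.eval_mul]
    have : P.eval t = ∑ i : Fin n, w i * t ^ (i : ℕ) := by
      simp [hP, Polynomial.eval_finset_sum]
    rw [this]
    have : Q.eval t = ∑ i : Fin m, r i * t ^ (i : ℕ) := by
      simp [hQ, Polynomial.eval_finset_sum]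
    rw [this, h t]
  have hPQ : P * Q = 0 := by
    apply Polynomial.funext; intro t; rw [hev t]; simp
  rcases mul_eq_zero.1 hPQ with h0 | h0
  · left
    apply vec_eq_zero_of_eval
    intro t
    have : P.eval t = ∑ i : Fin n, w i * t ^ (i : ℕ) := by
      simp [hP, Polynomial.eval_finset_sum]
    rw [← this, h0]; simp
  · right
    apply vec_eq_zero_of_eval
    intro t
    have : Q.eval t = ∑ i : Fin m, r i * t ^ (i : ℕ) := by
      simp [hQ, Polynomial.eval_finset_sum]
    rw [← this, h0]; simp



def prodCoef (a b : Fin 6 → k) : Fin 7 → k := ![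
    a 0 * a 1 * a 2 * a 3 * a 4 * a 5,
    b 0 * a 1 * a 2 * a 3 * a 4 * a 5 + a 0 * b 1 * a 2 * a 3 * a 4 * a 5 + a 0 * a 1 * b 2 * a 3 * a 4 * a 5 + a 0 * a 1 * a 2 * b 3 * a 4 * a 5 + a 0 * a 1 * a 2 * a 3 * b 4 * a 5 + a 0 * a 1 * a 2 * a 3 * a 4 * b 5,
    b 0 * b 1 * a 2 * a 3 * a 4 * a 5 + b 0 * a 1 * b 2 * a 3 * a 4 * a 5 + b 0 * a 1 * a 2 * b 3 * a 4 * a 5 + b 0 * a 1 * a 2 * a 3 * b 4 * a 5 + b 0 * a 1 * a 2 * a 3 * a 4 * b 5 + a 0 * b 1 * b 2 * a 3 * a 4 * a 5 + a 0 * b 1 * a 2 * b 3 * a 4 * a 5 + a 0 * b 1 * a 2 * a 3 * b 4 * a 5 + a 0 * b 1 * a 2 * a 3 * a 4 * b 5 + a 0 * a 1 * b 2 * b 3 * a 4 * a 5 + a 0 * a 1 * b 2 * a 3 * b 4 * a 5 + a 0 * a 1 * b 2 * a 3 * a 4 * b 5 + a 0 * a 1 * a 2 * b 3 * b 4 * a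 5 + a 0 * a 1 * a 2 * b 3 * a 4 * b 5 + a 0 * a 1 * a 2 * a 3 * b 4 * b 5,
    b 0 * b 1 * b 2 * a 3 * a 4 * a 5 + b 0 * b 1 * a 2 * b 3 * a 4 * a 5 + b 0 * b 1 * a 2 * a 3 * b 4 * a 5 + b 0 * b 1 * a 2 * a 3 * a 4 * b 5 + b 0 * a 1 * b 2 * b 3 * a 4 * a 5 + b 0 * a 1 * b 2 * a 3 * b 4 * a 5 + b 0 * a 1 * b 2 * a 3 * a 4 * b 5 + b 0 * a 1 * a 2 * b 3 * b 4 * a 5 + b 0 * a 1 * a 2 * b 3 * a 4 * b 5 + b 0 * a 1 * a 2 * a 3 * b 4 * b 5 + a 0 * b 1 * b 2 * b 3 * a 4 * a 5 + a 0 * b 1 * b 2 * a 3 * b 4 * a 5 + a 0 * b 1 * b 2 * a 3 * a 4 * b 5 + a 0 * b 1 * a 2 * b 3 * b 4 * a 5 + a 0 * b 1 * a 2 * b 3 * a 4 * b 5 + a 0 * b 1 * a 2 * a 3 * b 4 * b 5 + a 0 * a 1 * b 2 * b 3 * b 4 * a 5 + a 0 * a 1 * b 2 * b 3 * a 4 *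 b 5 + a 0 * a 1 * b 2 * a 3 * b 4 * b 5 + a 0 * a 1 * a 2 * b 3 * b 4 * b 5,
    b 0 * b 1 * b 2 * b 3 * a 4 * a 5 + b 0 * b 1 * b 2 * a 3 * b 4 * a 5 + b 0 * b 1 * b 2 * a 3 * a 4 * b 5 + b 0 * b 1 * a 2 * b 3 * b 4 * a 5 + b 0 * b 1 * a 2 * b 3 * a 4 * b 5 + b 0 * b 1 * a 2 * a 3 * b 4 * b 5 + b 0 * a 1 * b 2 * b 3 * b 4 * a 5 + b 0 * a 1 * b 2 * b 3 * a 4 * b 5 + b 0 * a 1 * b 2 * a 3 * b 4 * b 5 + b 0 * a 1 * a 2 * b 3 * b 4 * b 5 + a 0 * b 1 * b 2 * b 3 * b 4 * a 5 + a 0 * b 1 * b 2 * b 3 * a 4 * b 5 + a 0 * b 1 * b 2 * a 3 * b 4 * b 5 + a 0 * b 1 * a 2 * b 3 * b 4 * b 5 + a 0 * a 1 * b 2 * b 3 * b 4 * b 5,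
    b 0 * b 1 * b 2 * b 3 * b 4 * a 5 + b 0 * b 1 * b 2 * b 3 * a 4 * b 5 + b 0 * b 1 * b 2 * a 3 * b 4 * b 5 + b 0 * b 1 * a 2 * b 3 * b 4 * b 5 + b 0 * a 1 * b 2 * b 3 * b 4 * b 5 + a 0 * b 1 * b 2 * b 3 * b 4 * b 5,
    b 0 * b 1 * b 2 * b 3 * b 4 * b 5]

lemma E6_prodCoef (a b : Fin 6 → k) (s t : k) :
    E6 (prodCoef a b) s t = ∏ j : Fin 6, (a j * s + b j * t) := by
  simp only [Fin.prod_univ_six]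
  simp [E6, prodCoef]
  ring

/-- The evaluation vector of a point for sextic forms. -/
def Avec (s t : k) : Fin 7 → k :=
  ![s^6, s^5*t, s^4*t^2, s^3*t^3, s^2*t^4, s*t^5, t^6]

/-- Any two sextic binary forms vanishing at six points of `ℙ¹` in
general position are proportional. -/
lemma exists_scalar (s t : Fin 6 → k)
    (hnz : ∀ i, s i ≠ 0 ∨ t i ≠ 0)
    (hcross : ∀ i j, i ≠ j → s i * t j - s j * t i ≠ 0)
    (w₀ w : Fin 7 → k) (hne : w₀ ≠ 0)
    (hw₀ : ∀ i, E6 w₀ (s i) (t i) = 0) (hw : ∀ i, E6 w (s i) (t i) = 0) :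
    ∃ c : k, w = c • w₀ := by
  classical
  set A : Matrix (Fin 6) (Fin 7) k := Matrix.of fun i kk => Avec (s i) (t i) kk with hA
  set Φ : (Fin 7 → k) →ₗ[k] (Fin 6 → k) := A.mulVecLin with hΦ
  have hΦap : ∀ (u : Fin 7 → k) (i : Fin 6), Φ u i = E6 u (s i) (t i) := by
    intro u i
    show A.mulVec u i = _
    simp [Matrix.mulVec, hA, dotProduct, Fin.sum_univ_seven, Avec, E6]
    ring
  -- the dual family of products of linear forms
  set aa : Fin 6 → Fin 6 → k :=
    fun i l => if l = i then (if s i = 0 then 0 else 1) else t l with haa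
  set bb : Fin 6 → Fin 6 → k :=
    fun i l => if l = i then (if s i = 0 then 1 else 0) else -(s l) with hbb
  set val : Fin 6 → k := fun i => ∏ l, (aa i l * s i + bb i l * t i) with hval
  have hvalne : ∀ i, val i ≠ 0 := by
    intro i
    rw [hval]
    rw [Finset.prod_ne_zero_iff]
    intro l _
    by_cases hl : l = i
    · subst hl
      simp only [haa, hbb, if_pos rfl]
      by_cases hs : s l = 0
      · rw [if_pos hs, if_pos hs]
        have := hnz l
        simpa [hs] using this
      · rw [if_neg hs, if_neg hs]
        simpa using hs
    · simp only [haa, hbb, if_neg hl]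
      have h := hcross i l (fun hc => hl hc.symm)
      intro hc
      apply h
      rw [← hc]; ring
  have hPeval : ∀ i j, E6 (prodCoef (aa i) (bb i)) (s j) (t j)
      = ∏ l, (aa i l * s j + bb i l * t j) := fun i j => E6_prodCoef _ _ _ _
  have hoff : ∀ i j, i ≠ j → E6 (prodCoef (aa i) (bb i)) (s j) (t j) = 0 := by
    intro i j hij
    rw [hPeval]
    apply Finset.prod_eq_zero (Finset.mem_univ j)
    have hji : j ≠ i := fun hc => hij hc.symm
    simp only [haa, hbb, if_neg hji]
    ring
  have hdiag : ∀ i, E6 (prodCoef (aa i) (bb i)) (s i) (t i) = val i := fun i => hPeval i i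
  -- surjectivity of Φ
  have hsurj : Function.Surjective Φ := by
    intro y
    refine ⟨∑ i, (y i / val i) • prodCoef (aa i) (bb i), ?_⟩
    funext j
    rw [map_sum]
    rw [Finset.sum_apply]
    rw [Finset.sum_eq_single j]
    · rw [map_smul]
      simp only [Pi.smul_apply, smul_eq_mul]
      rw [hΦap, hdiag, div_mul_cancel₀ _ (hvalne j)]
    · intro i _ hij
      rw [map_smul]
      simp only [Pi.smul_apply, smul_eq_mul]
      rw [hΦap, hoff i j hij, mul_zero]
    · intro hj; exact absurd (Finset.mem_univ j) hj
  have hrange : LinearMap.range Φ = ⊤ := LinearMap.range_eq_top.2 hsurj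
  have hrk : Module.finrank k (LinearMap.range Φ) = 6 := by
    rw [hrange]
    simpa using (Module.finrank_fin_fun (R := k) (n := 6))

  have hrn := LinearMap.finrank_range_add_finrank_ker Φ
  rw [hrk] at hrn
  have h7 : Module.finrank k (Fin 7 → k) = 7 := Module.finrank_fin_fun (R := k)
  rw [h7] at hrn
  have hker : Module.finrank k (LinearMap.ker Φ) = 1 := by omega
  have hw₀mem : w₀ ∈ LinearMap.ker Φ := by
    rw [LinearMap.mem_ker]; funext i; rw [hΦap]; exact hw₀ i
  have hwmem : w ∈ LinearMap.ker Φ := by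
    rw [LinearMap.mem_ker]; funext i; rw [hΦap]; exact hw i
  have hle : (Submodule.span k {w₀}) ≤ LinearMap.ker Φ := by
    rw [Submodule.span_le, Set.singleton_subset_iff]; exact hw₀mem
  have hspan : Module.finrank k (Submodule.span k {w₀}) = 1 :=
    finrank_span_singleton hne
  have heq : Submodule.span k {w₀} = LinearMap.ker Φ :=
    Submodule.eq_of_le_of_finrank_le hle (by rw [hker, hspan])
  have : w ∈ Submodule.span k ({w₀} : Set (Fin 7 → k)) := heq ▸ hwmem
  obtain ⟨c, hc⟩ := Submodule.mem_span_singleton.1 this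
  exact ⟨c, hc.symm⟩


lemma inj4 {α : Type*} {i j a b : α} (h1 : i ≠ j) (h2 : a ≠ i) (h3 : a ≠ j)
    (h4 : b ≠ i) (h5 : b ≠ j) (h6 : b ≠ a) :
    Function.Injective (![i, j, a, b] : Fin 4 → α) := by
  intro x y hxy
  fin_cases x <;> fin_cases y <;> simp_all

end TCHelp

open TCHelp


/-- The twisted cubic through six points of `ℙ³` in general position is unique:
two twisted cubics passing through all six points coincide as subsets of
`ℙ³`. -/
theorem twisted_cubic_through_six_points_unique {k : Type*} [Field k]
    [IsAlgClosed k]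
    (p : Fin 6 → Fin 4 → k) (hp : ∀ i, p i ≠ 0)
    (hgen : ∀ e : Fin 4 → Fin 6, Function.Injective e →
      LinearIndependent k (p ∘ e))
    (g₁ g₂ : GL (Fin 4) k)
    (h₁ : ∀ i, ∃ s t : k, (s, t) ≠ (0, 0) ∧ ∃ c : k, c ≠ 0 ∧
      (g₁ : Matrix (Fin 4) (Fin 4) k).mulVec
        ![s ^ 3, s ^ 2 * t, s * t ^ 2, t ^ 3] = c • p i)
    (h₂ : ∀ i, ∃ s t : k, (s, t) ≠ (0, 0) ∧ ∃ c : k, c ≠ 0 ∧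
      (g₂ : Matrix (Fin 4) (Fin 4) k).mulVec
        ![s ^ 3, s ^ 2 * t, s * t ^ 2, t ^ 3] = c • p i) :
    ∀ s t : k, (s, t) ≠ (0, 0) → ∃ s' t' : k, (s', t') ≠ (0, 0) ∧
      ∃ c : k, c ≠ 0 ∧
        (g₂ : Matrix (Fin 4) (Fin 4) k).mulVec
          ![s' ^ 3, s' ^ 2 * t', s' * t' ^ 2, t' ^ 3]
        = c • (g₁ : Matrix (Fin 4) (Fin 4) k).mulVec
          ![s ^ 3, s ^ 2 * t, s * t ^ 2, t ^ 3] := by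
  classical
  set ν : k → k → Fin 4 → k := fun s t => ![s ^ 3, s ^ 2 * t, s * t ^ 2, t ^ 3] with hν
  set m : Matrix (Fin 4) (Fin 4) k := ((g₂⁻¹ * g₁ : GL (Fin 4) k) : Matrix (Fin 4) (Fin 4) k)
    with hm
  have hg₂m : (g₂ : Matrix (Fin 4) (Fin 4) k) * m = (g₁ : Matrix (Fin 4) (Fin 4) k) := by
    rw [hm, ← Units.val_mul]
    congr 1
    group
  have hinvm : ((g₂⁻¹ * g₁ : GL (Fin 4) k)⁻¹ : Matrix (Fin 4) (Fin 4) k) * m = 1 := by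
    rw [hm, ← Matrix.coe_units_inv, ← Units.val_mul, inv_mul_cancel, Units.val_one]
  have hminv : m * ((g₂⁻¹ * g₁ : GL (Fin 4) k)⁻¹ : Matrix (Fin 4) (Fin 4) k) = 1 := by
    rw [hm, ← Matrix.coe_units_inv, ← Units.val_mul, mul_inv_cancel, Units.val_one]
  have hg₂inj : Function.Injective ((g₂ : Matrix (Fin 4) (Fin 4) k).mulVec) := by
    intro x y hxy
    have h2 : ((g₂⁻¹ : GL (Fin 4) k) : Matrix (Fin 4) (Fin 4) k).mulVec
        ((g₂ : Matrix (Fin 4) (Fin 4) k).mulVec x)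
        = ((g₂⁻¹ : GL (Fin 4) k) : Matrix (Fin 4) (Fin 4) k).mulVec
        ((g₂ : Matrix (Fin 4) (Fin 4) k).mulVec y) := by rw [hxy]
    rwa [Matrix.mulVec_mulVec, Matrix.mulVec_mulVec, ← Units.val_mul, inv_mul_cancel,
      Units.val_one, Matrix.one_mulVec, Matrix.one_mulVec] at h2
  -- choose parameters for the six points on each cubic
  choose s1 t1 hst1 htmp using h₁
  choose c1 hc1 hv1 using htmp
  choose s2 t2 hst2 htmp2 using h₂
  choose c2 hc2 hv2 using htmp2
  have hv1' : ∀ i, ((g₁ : Matrix (Fin 4) (Fin 4) k)).mulVec (ν (s1 i) (t1 i)) = c1 i • p i :=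
    fun i => hv1 i
  have hv2' : ∀ i, ((g₂ : Matrix (Fin 4) (Fin 4) k)).mulVec (ν (s2 i) (t2 i)) = c2 i • p i :=
    fun i => hv2 i
  have hnz1 : ∀ i, s1 i ≠ 0 ∨ t1 i ≠ 0 := by
    intro i
    by_contra hcon
    push_neg at hcon
    exact hst1 i (by rw [hcon.1, hcon.2])
  have hmν : ∀ i, m.mulVec (ν (s1 i) (t1 i)) = (c1 i / c2 i) • ν (s2 i) (t2 i) := by
    intro i
    apply hg₂inj
    rw [Matrix.mulVec_mulVec, hg₂m, hv1' i, Matrix.mulVec_smul, hv2' i, smul_smul,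
      div_mul_cancel₀ _ (hc2 i)]
  have hcross : ∀ i j, i ≠ j → s1 i * t1 j - s1 j * t1 i ≠ 0 := by
    intro i j hij hzero
    obtain ⟨μ, hμ0, hμs, hμt⟩ : ∃ μ : k, μ ≠ 0 ∧ s1 i = μ * s1 j ∧ t1 i = μ * t1 j := by
      rcases eq_or_ne (s1 j) 0 with hsj | hsj
      · have htj : t1 j ≠ 0 := by
          rcases hnz1 j with h | h
          · exact absurd hsj h
          · exact h
        have hsi : s1 i = 0 := by
          have h0 : s1 i * t1 j = 0 := by
            have := hzero
            rw [hsj] at this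
            linear_combination this
          rcases mul_eq_zero.1 h0 with h | h
          · exact h
          · exact absurd h htj
        have hti : t1 i ≠ 0 := by
          rcases hnz1 i with h | h
          · exact absurd hsi h
          · exact h
        refine ⟨t1 i / t1 j, div_ne_zero hti htj, by rw [hsi, hsj]; ring, by field_simp⟩
      · have hsi : s1 i ≠ 0 := by
          intro hsi0
          have h0 : s1 j * t1 i = 0 := by
            rw [hsi0] at hzero
            linear_combination -hzero
          have hti : t1 i = 0 := by
            rcases mul_eq_zero.1 h0 with h | h
            · exact absurd h hsj
            · exact h
          exact hst1 i (by rw [hsi0, hti])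
        refine ⟨s1 i / s1 j, div_ne_zero hsi hsj, by field_simp, ?_⟩
        field_simp
        linear_combination -(hzero)
    have hνprop : ν (s1 i) (t1 i) = (μ^3) • ν (s1 j) (t1 j) := by
      funext a
      fin_cases a <;> simp [hν, hμs, hμt] <;> ring
    set ρ : k := (c1 i)⁻¹ * (μ^3 * c1 j) with hρ
    have hρ0 : ρ ≠ 0 := by
      apply mul_ne_zero (inv_ne_zero (hc1 i)) (mul_ne_zero (pow_ne_zero 3 hμ0) (hc1 j))
    have hpij : p i = ρ • p j := by
      have h2 : c1 i • p i = (μ^3 * c1 j) • p j := by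
        rw [← hv1' i, hνprop, Matrix.mulVec_smul, hv1' j, smul_smul]
      have h3 := congrArg (fun v => (c1 i)⁻¹ • v) h2
      simpa [smul_smul, inv_mul_cancel₀ (hc1 i), hρ] using h3
    obtain ⟨a, hai, haj⟩ : ∃ a : Fin 6, a ≠ i ∧ a ≠ j := by
      by_contra hcon
      push_neg at hcon
      have hsub : (Finset.univ : Finset (Fin 6)) ⊆ {i, j} := by
        intro x _
        rcases eq_or_ne x i with h | h
        · simp [h]
        · simp [hcon x h]
      have hcard := Finset.card_le_card hsub
      have h2 : ({i, j} : Finset (Fin 6)).card ≤ 2 := by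
        apply le_trans (Finset.card_insert_le _ _)
        simp
      simp at hcard
      omega
    obtain ⟨b, hbi, hbj, hba⟩ : ∃ b : Fin 6, b ≠ i ∧ b ≠ j ∧ b ≠ a := by
      by_contra hcon
      push_neg at hcon
      have hsub : (Finset.univ : Finset (Fin 6)) ⊆ {i, j, a} := by
        intro x _
        rcases eq_or_ne x i with h | h
        · simp [h]
        · rcases eq_or_ne x j with h' | h'
          · simp [h']
          · simp [hcon x h h']
      have hcard := Finset.card_le_card hsub
      have h2 : ({i, j, a} : Finset (Fin 6)).card ≤ 3 := by
        apply le_trans (Finset.card_insert_le _ _)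
        have := Finset.card_insert_le j ({a} : Finset (Fin 6))
        simp at this ⊢
        omega
      simp at hcard
      omega
    have einj : Function.Injective (![i, j, a, b] : Fin 4 → Fin 6) :=
      inj4 hij hai haj hbi hbj hba
    have hLI := hgen _ einj
    have hsum : ∑ x : Fin 4, (![1, -ρ, 0, 0] : Fin 4 → k) x • (p ∘ ![i, j, a, b]) x = 0 := by
      rw [Fin.sum_univ_four]
      simp [Function.comp]
      rw [hpij, ← sub_eq_add_neg, sub_self]
    have h10 := (Fintype.linearIndependent_iff.1 hLI) _ hsum 0
    simp at h10
  -- evaluation of the composed map as cubic forms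
  have hfrow : ∀ (a : Fin 4) (s t : k), m.mulVec (ν s t) a = E3 (m a) s t := by
    intro a s t
    simp [Matrix.mulVec, dotProduct, Fin.sum_univ_four, hν, E3]
    ring
  set u1 : Fin 7 → k := cconv (m 0) (m 2) - cconv (m 1) (m 1) with hu1
  set u2 : Fin 7 → k := cconv (m 0) (m 3) - cconv (m 1) (m 2) with hu2
  set u3 : Fin 7 → k := cconv (m 1) (m 3) - cconv (m 2) (m 2) with hu3
  have hEu1 : ∀ s t : k, E6 u1 s t
      = E3 (m 0) s t * E3 (m 2) s t - E3 (m 1) s t * E3 (m 1) s t := by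
    intro s t; rw [hu1, E6_sub, E6_cconv, E6_cconv]
  have hEu2 : ∀ s t : k, E6 u2 s t
      = E3 (m 0) s t * E3 (m 3) s t - E3 (m 1) s t * E3 (m 2) s t := by
    intro s t; rw [hu2, E6_sub, E6_cconv, E6_cconv]
  have hEu3 : ∀ s t : k, E6 u3 s t
      = E3 (m 1) s t * E3 (m 3) s t - E3 (m 2) s t * E3 (m 2) s t := by
    intro s t; rw [hu3, E6_sub, E6_cconv, E6_cconv]
  have hq : ∀ (i : Fin 6) (a : Fin 4),
      E3 (m a) (s1 i) (t1 i) = (c1 i / c2 i) * (ν (s2 i) (t2 i) a) := by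
    intro i a
    rw [← hfrow a (s1 i) (t1 i), hmν i]
    simp
  have hroot1 : ∀ i, E6 u1 (s1 i) (t1 i) = 0 := by
    intro i
    rw [hEu1, hq i 0, hq i 1, hq i 2]
    simp [hν]
    ring
  have hroot2 : ∀ i, E6 u2 (s1 i) (t1 i) = 0 := by
    intro i
    rw [hEu2, hq i 0, hq i 1, hq i 2, hq i 3]
    simp [hν]
    ring
  have hroot3 : ∀ i, E6 u3 (s1 i) (t1 i) = 0 := by
    intro i
    rw [hEu3, hq i 1, hq i 2, hq i 3]
    simp [hν]
    ring
  -- the three sextics vanish identically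
  have hzero : u1 = 0 ∧ u2 = 0 ∧ u3 = 0 := by
    by_contra hcon
    have hex : ∃ w₀ : Fin 7 → k, w₀ ≠ 0 ∧ ∀ i, E6 w₀ (s1 i) (t1 i) = 0 := by
      rcases not_and_or.1 hcon with h | h
      · exact ⟨u1, h, hroot1⟩
      · rcases not_and_or.1 h with h' | h'
        · exact ⟨u2, h', hroot2⟩
        · exact ⟨u3, h', hroot3⟩
    obtain ⟨w₀, hw₀ne, hw₀root⟩ := hex
    obtain ⟨l1, hl1⟩ := exists_scalar s1 t1 hnz1 hcross w₀ u1 hw₀ne hw₀root hroot1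
    obtain ⟨l2, hl2⟩ := exists_scalar s1 t1 hnz1 hcross w₀ u2 hw₀ne hw₀root hroot2
    obtain ⟨l3, hl3⟩ := exists_scalar s1 t1 hnz1 hcross w₀ u3 hw₀ne hw₀root hroot3
    set r : Fin 4 → k := fun bb => l3 * m 1 bb - l2 * m 2 bb + l1 * m 3 bb with hr
    have hmul : ∀ tt : k,
        (∑ x : Fin 7, w₀ x * tt ^ (x : ℕ)) * (∑ x : Fin 4, r x * tt ^ (x : ℕ)) = 0 := by
      intro tt
      rw [← E6_one, ← E3_one]
      have hE3r : E3 r 1 tt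
          = l3 * E3 (m 1) 1 tt - l2 * E3 (m 2) 1 tt + l1 * E3 (m 3) 1 tt := by
        simp [E3, hr]
        ring
      rw [hE3r]
      have e1 : E6 u1 1 tt = l1 * E6 w₀ 1 tt := by rw [hl1, E6_smul]
      have e2 : E6 u2 1 tt = l2 * E6 w₀ 1 tt := by rw [hl2, E6_smul]
      have e3 : E6 u3 1 tt = l3 * E6 w₀ 1 tt := by rw [hl3, E6_smul]
      calc E6 w₀ 1 tt * (l3 * E3 (m 1) 1 tt - l2 * E3 (m 2) 1 tt + l1 * E3 (m 3) 1 tt)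
          = E3 (m 1) 1 tt * (l3 * E6 w₀ 1 tt) - E3 (m 2) 1 tt * (l2 * E6 w₀ 1 tt)
            + E3 (m 3) 1 tt * (l1 * E6 w₀ 1 tt) := by ring
        _ = E3 (m 1) 1 tt * E6 u3 1 tt - E3 (m 2) 1 tt * E6 u2 1 tt
            + E3 (m 3) 1 tt * E6 u1 1 tt := by rw [e1, e2, e3]
        _ = 0 := by rw [hEu1 1 tt, hEu2 1 tt, hEu3 1 tt]; ring
    rcases vec_mul_eval_zero w₀ r hmul with h0 | h0
    · exact hw₀ne h0
    · have hvm : Matrix.vecMul (![0, l3, -l2, l1] : Fin 4 → k) m = 0 := by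
        funext bb
        have hx := congrFun h0 bb
        simp [hr] at hx
        simp [Matrix.vecMul, dotProduct, Fin.sum_univ_four]
        linear_combination hx
      have hcv : (![0, l3, -l2, l1] : Fin 4 → k) = 0 := by
        have h4 := congrArg
          (fun v => Matrix.vecMul v ((g₂⁻¹ * g₁ : GL (Fin 4) k)⁻¹ : Matrix (Fin 4) (Fin 4) k)) hvm
        simp only [Matrix.vecMul_vecMul, Matrix.zero_vecMul] at h4
        rw [hminv, Matrix.vecMul_one] at h4
        exact h4
      have hl30 : l3 = 0 := by simpa using congrFun hcv 1
      have hl20 : l2 = 0 := by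
        have := congrFun hcv 2
        simpa using neg_eq_zero.1 (by simpa using this)
      have hl10 : l1 = 0 := by simpa using congrFun hcv 3
      exact hcon ⟨by rw [hl1, hl10, zero_smul], by rw [hl2, hl20, zero_smul],
        by rw [hl3, hl30, zero_smul]⟩
  obtain ⟨hz1, hz2, hz3⟩ := hzero
  have hq1 : ∀ s t : k, E3 (m 0) s t * E3 (m 2) s t = E3 (m 1) s t * E3 (m 1) s t := by
    intro s t
    have h := hEu1 s t
    rw [hz1] at h
    simp [E6] at h
    linear_combination -h
  have hq2 : ∀ s t : k, E3 (m 0) s t * E3 (m 3) s t = E3 (m 1) s t * E3 (m 2) s t := by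
    intro s t
    have h := hEu2 s t
    rw [hz2] at h
    simp [E6] at h
    linear_combination -h
  have hq3 : ∀ s t : k, E3 (m 1) s t * E3 (m 3) s t = E3 (m 2) s t * E3 (m 2) s t := by
    intro s t
    have h := hEu3 s t
    rw [hz3] at h
    simp [E6] at h
    linear_combination -h
  -- the endgame
  intro s t hst
  set w : Fin 4 → k := m.mulVec (ν s t) with hwdef
  have q1 : w 0 * w 2 = w 1 * w 1 := by
    rw [hwdef]
    rw [hfrow 0 s t, hfrow 1 s t, hfrow 2 s t]
    exact hq1 s t
  have q2 : w 0 * w 3 = w 1 * w 2 := by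
    rw [hwdef]
    rw [hfrow 0 s t, hfrow 1 s t, hfrow 2 s t, hfrow 3 s t]
    exact hq2 s t
  have q3 : w 1 * w 3 = w 2 * w 2 := by
    rw [hwdef]
    rw [hfrow 1 s t, hfrow 2 s t, hfrow 3 s t]
    exact hq3 s t
  have hwne : w ≠ 0 := by
    intro h0
    have hν0 : ν s t = 0 := by
      have h5 := congrArg
        (fun v => Matrix.mulVec ((g₂⁻¹ * g₁ : GL (Fin 4) k)⁻¹ : Matrix (Fin 4) (Fin 4) k) v)
        (hwdef ▸ h0 : m.mulVec (ν s t) = 0)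
      simp only [Matrix.mulVec_mulVec, Matrix.mulVec_zero] at h5
      rw [hinvm, Matrix.one_mulVec] at h5
      exact h5
    have hs0 : s = 0 := by
      have := congrFun hν0 0
      simp [hν] at this
      exact this
    have ht0 : t = 0 := by
      have := congrFun hν0 3
      simp [hν] at this
      exact this
    exact hst (by rw [hs0, ht0])
  by_cases hw0 : w 0 = 0
  · have hwb1 : w 1 = 0 := by
      have h := q1
      rw [hw0] at h
      exact mul_self_eq_zero.1 (by linear_combination -h)
    have hwb2 : w 2 = 0 := by
      have h := q3
      rw [hwb1] at h
      exact mul_self_eq_zero.1 (by linear_combination -h)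
    have hw3 : w 3 ≠ 0 := by
      intro h3
      apply hwne
      funext a
      fin_cases a
      · exact hw0
      · exact hwb1
      · exact hwb2
      · exact h3
    refine ⟨0, w 3, ?_, w 3 ^ 2, pow_ne_zero 2 hw3, ?_⟩
    · simp [Prod.ext_iff, hw3]
    · have hνw : (![(0:k) ^ 3, 0 ^ 2 * w 3, 0 * w 3 ^ 2, w 3 ^ 3] : Fin 4 → k)
          = (w 3 ^ 2) • w := by
        funext a
        fin_cases a
        · simp [hw0]
        · simp [hwb1]
        · simp [hwb2]
        · simp
          try ring
      rw [hνw, Matrix.mulVec_smul, hwdef, Matrix.mulVec_mulVec, hg₂m]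
  · have hνw : (![w 0 ^ 3, w 0 ^ 2 * w 1, w 0 * w 1 ^ 2, w 1 ^ 3] : Fin 4 → k)
        = (w 0 ^ 2) • w := by
      funext a
      fin_cases a
      · simp
        try ring
      · simp
        try ring
      · simp
        linear_combination (-(w 0)) * q1
      · simp
        linear_combination (-(w 1)) * q1 + (-(w 0)) * q2
    refine ⟨w 0, w 1, ?_, w 0 ^ 2, pow_ne_zero 2 hw0, ?_⟩
    · simp [Prod.ext_iff, hw0]
    · rw [hνw, Matrix.mulVec_smul, hwdef, Matrix.mulVec_mulVec, hg₂m]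
end
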